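/- arXiv:2112.12588 — 3 statements merged into one kernel-verified Lean document; each statement's English description precedes it below -/
import Mathlib

section
/- Let R be a Noetherian local ring and let L be a proper ideal of R generated by a regular sequence of length c such that R/L has finite length. Then for every positive integer m, the length of R/L^m equals λ(R/L)·C(c+m-1, c), where λ denotes length and C(c+m-1, c) is the binomial coefficient. -/
/-!
Let `K` be generated by a regular sequence `x :: zs` and `R̄ = R ⧸ (x)`. Multiplication by `x`
gives an exact sequence
`0 → R ⧸ (K ^ (m + 1) : x) → R ⧸ K ^ (m + 1) → R ⧸ (K ^ (m + 1) + (x)) → 0`.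
Its last term is `R̄ ⧸ K̄ ^ (m + 1)`, with `K̄` generated by the regular sequence `zs` in `R̄`,
and the colon ideal is `K ^ m`, so Pascal's rule closes an induction on the length of the sequence.

The equality `(K ^ (m + 1) : x) = K ^ m` is the heart. Regular sequences in a Noetherian local
ring may be permuted, so `x` may be moved to the end, and it suffices that the last element of
a regular sequence `ys ++ [x]` is a nonzerodivisor modulo every power of `(ys)`. This follows by
a double induction on the length of `ys` and the exponent, again passing to `R ⧸ (y₁)`.
-/

open Ideal Filter

universe u

/-- The length of a module, as the supremum of lengths of strict chains of submodules. -/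
noncomputable def moduleLength (S : Type*) [CommRing S] (M : Type*) [AddCommGroup M]
    [Module S M] : ℕ∞ :=
  ⨆ p : LTSeries (Submodule S M), (p.length : ℕ∞)

open RingTheory.Sequence Pointwise

theorem moduleLength_eq_length (S : Type*) [CommRing S] (M : Type*) [AddCommGroup M]
    [Module S M] : moduleLength S M = Module.length S M := by
  apply WithBot.coe_injective
  rw [Module.coe_length, Order.krullDim, moduleLength, WithBot.coe_iSup (OrderTop.bddAbove _)]
  rfl

section

variable {R : Type*} [CommRing R]

theorem Ideal.sup_pow_succ_le (J X : Ideal R) (m : ℕ) :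
    (J ⊔ X) ^ (m + 1) ≤ J ^ (m + 1) ⊔ X * (J ⊔ X) ^ m := by
  induction m with
  | zero => simp
  | succ m ih =>
    calc (J ⊔ X) ^ (m + 2) = (J ⊔ X) ^ (m + 1) * (J ⊔ X) := pow_succ _ _
      _ ≤ (J ^ (m + 1) ⊔ X * (J ⊔ X) ^ m) * (J ⊔ X) := mul_mono_left ih
      _ = J ^ (m + 1) * J ⊔ (J ^ (m + 1) * X ⊔ X * ((J ⊔ X) ^ m * (J ⊔ X))) := by
        rw [Ideal.sup_mul, Ideal.mul_sup, mul_assoc, sup_assoc]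
      _ ≤ J ^ (m + 2) ⊔ X * (J ⊔ X) ^ (m + 1) := by
        rw [← pow_succ, ← pow_succ]
        refine sup_le_sup_left (sup_le ?_ le_rfl) _
        rw [mul_comm]
        exact mul_mono_right (pow_right_mono le_sup_left _)

theorem Ideal.mem_sup_span_pow_of_mul_mem_pow_succ {J : Ideal R} {x : R} {m : ℕ}
    (hx : ∀ s, x * s ∈ J ^ (m + 1) → s ∈ J ^ (m + 1)) {r : R}
    (hr : x * r ∈ (J ⊔ span {x}) ^ (m + 1)) : r ∈ (J ⊔ span {x}) ^ m := by
  obtain ⟨u, hu, w, hw, huw⟩ := Submodule.mem_sup.mp (sup_pow_succ_le J _ m hr)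
  obtain ⟨v, hv, rfl⟩ := mem_span_singleton_mul.mp hw
  have hrv : r - v ∈ J ^ (m + 1) := hx _ (by rwa [mul_sub, ← huw, add_sub_cancel_right])
  simpa using add_mem (pow_le_pow_right (Nat.le_succ m)
    (pow_right_mono le_sup_left (m + 1) hrv)) hv

theorem Ideal.map_mk_span_ofList_cons (x : R) (zs : List R) :
    (ofList (x :: zs)).map (Quotient.mk (span {x})) =
      ofList (zs.map (Quotient.mk (span {x}))) := by
  rw [map_ofList, List.map_cons, ofList_cons, Quotient.mk_singleton_self,
    span_singleton_eq_bot.mpr rfl, bot_sup_eq]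

theorem Ideal.length_quotient_map_mk {J T : Ideal R} (h : J ≤ T) :
    Module.length (R ⧸ J) ((R ⧸ J) ⧸ T.map (Quotient.mk J)) = Module.length R (R ⧸ T) := by
  rw [← Module.length_eq_of_surjective (S := R) Quotient.mk_surjective]
  exact (DoubleQuot.quotQuotEquivQuotOfLEₐ R h).toLinearEquiv.length_eq

theorem Ideal.length_quotient_eq_length_quotient_colon_add (I : Ideal R) (x : R) :
    Module.length R (R ⧸ I) =
      Module.length R (R ⧸ I.colon (span {x})) + Module.length R (R ⧸ I ⊔ span {x}) := by
  let f : R →ₗ[R] R ⧸ I := I.mkQ ∘ₗ LinearMap.mulRight R x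
  have hker : LinearMap.ker f = I.colon (span {x}) := by
    ext r
    simp [f, -map_mul, Quotient.eq_zero_iff_mem]
  have hrange : LinearMap.range f = Submodule.map I.mkQ (span {x}) := by
    rw [LinearMap.range_comp]
    congr 1
    ext y
    simp [mem_span_singleton', eq_comm]
  rw [Module.length_eq_add_of_exact _ _ (LinearMap.range f).injective_subtype
    (LinearMap.range f).mkQ_surjective (LinearMap.exact_subtype_mkQ _),
    ← hker, f.quotKerEquivRange.length_eq, hrange,
    (Submodule.quotientQuotientEquivQuotientSup I (span {x})).length_eq]

namespace RingTheory.Sequence.IsRegular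

theorem of_append_left {M : Type*} [AddCommGroup M] [Module R M] {l₁ l₂ : List R}
    (h : IsRegular M (l₁ ++ l₂)) : IsRegular M l₁ where
  toIsWeaklyRegular := ((isWeaklyRegular_append_iff M l₁ l₂).mp h.1).1
  top_ne_smul htop := h.top_ne_smul <| Eq.symm <| top_le_iff.mp <|
    htop.le.trans (Submodule.smul_mono_left (by rw [ofList_append]; exact le_sup_left))

theorem quotient_span_head {x : R} {zs : List R} (h : IsRegular R (x :: zs)) :
    IsRegular (R ⧸ span {x}) (zs.map (Ideal.Quotient.mk (span {x}))) := by
  let e := Submodule.quotEquivOfEq _ _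
    (by simp [← Submodule.ideal_span_singleton_smul] : x • (⊤ : Submodule R R) = span {x})
  refine (AddEquiv.isRegular_congr (e := e.toAddEquiv) ?_).mp
    ((isRegular_cons_iff' R x zs).mp h).2
  refine List.forall₂_map_left_iff.mpr (List.forall₂_map_right_iff.mpr
    (List.forall₂_same.mpr fun a _ y ↦ ?_))
  obtain ⟨y, rfl⟩ := Submodule.Quotient.mk_surjective _ y
  rfl

theorem isLocalRing_quotient_span_head [IsLocalRing R] {x : R} {zs : List R}
    (h : IsRegular R (x :: zs)) : IsLocalRing (R ⧸ span {x}) :=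
  have := h.quotient_span_head.nontrivial
  .of_surjective' _ Ideal.Quotient.mk_surjective

variable [IsNoetherianRing R] [IsLocalRing R]

theorem append_singleton_of_cons {x : R} {zs : List R} (h : IsRegular R (x :: zs)) :
    IsRegular R (zs ++ [x]) :=
  IsLocalRing.isRegular_of_perm h (List.perm_append_singleton x zs).symm

theorem mem_ofList_pow_of_mul_mem {ys : List R} {x : R} (h : IsRegular R (ys ++ [x]))
    {m : ℕ} {r : R} (hr : x * r ∈ ofList ys ^ m) : r ∈ ofList ys ^ m := by
  obtain ⟨c, hc⟩ : ∃ c, ys.length = c := ⟨_, rfl⟩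
  induction c generalizing R ys x m r with
  | zero =>
    obtain rfl := List.eq_nil_of_length_eq_zero hc
    cases m with
    | zero => simp
    | succ m =>
      have hx : IsSMulRegular R x := ((isRegular_cons_iff R x []).mp h).1
      simp only [ofList_nil, ← zero_eq_bot, zero_pow m.succ_ne_zero] at hr ⊢
      exact hx.right_eq_zero_of_smul hr
  | succ c ih =>
    obtain ⟨y, zs, rfl⟩ := List.exists_cons_of_length_eq_add_one hc
    have hzs : zs.length = c := by simpa using hc
    induction m generalizing r with
    | zero => simp
    | succ m ihm =>
      have hreg : IsRegular R (y :: (zs ++ [x])) := h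
      have := hreg.isLocalRing_quotient_span_head
      have hmod : Ideal.Quotient.mk (span {y}) r ∈
          ofList (zs.map (Ideal.Quotient.mk (span {y}))) ^ (m + 1) := by
        refine ih (by simpa using hreg.quotient_span_head) ?_ (by simpa using hzs)
        rw [← map_mk_span_ofList_cons, ← Ideal.map_pow, ← map_mul]
        exact mem_map_of_mem _ hr
      rw [← map_mk_span_ofList_cons, ← Ideal.map_pow, mem_quotient_iff_mem_sup] at hmod
      obtain ⟨a, ha, _, hb, rfl⟩ := Submodule.mem_sup.mp hmod
      obtain ⟨s, rfl⟩ := mem_span_singleton'.mp hb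
      rw [ofList_cons, sup_comm] at ha hr ihm ⊢
      have hxs : x * s ∈ (ofList zs ⊔ span {y}) ^ m := by
        refine mem_sup_span_pow_of_mul_mem_pow_succ
          (fun t ht ↦ ih h.of_append_left.append_singleton_of_cons ht hzs) ?_
        rw [show y * (x * s) = x * (a + s * y) - x * a by ring]
        exact sub_mem hr (mul_mem_left _ x ha)
      rw [pow_succ]
      exact add_mem ha (mul_mem_mul (ihm hxs) (mem_sup_right (mem_span_singleton_self y)))

theorem colon_span_head_ofList_pow_succ {x : R} {zs : List R} (h : IsRegular R (x :: zs))
    (m : ℕ) : (ofList (x :: zs) ^ (m + 1)).colon (span {x}) = ofList (x :: zs) ^ m := by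
  ext r
  rw [mem_colon_span_singleton, ofList_cons, sup_comm]
  refine ⟨fun hr ↦ ?_, fun hr ↦ ?_⟩
  · refine mem_sup_span_pow_of_mul_mem_pow_succ
      (fun s hs ↦ h.append_singleton_of_cons.mem_ofList_pow_of_mul_mem hs) ?_
    rwa [mul_comm]
  · rw [pow_succ]
    exact mul_mem_mul hr (mem_sup_right (mem_span_singleton_self x))

theorem length_quotient_ofList_pow {rs : List R} (h : IsRegular R rs) {m : ℕ} (hm : 0 < m) :
    Module.length R (R ⧸ ofList rs ^ m) =
      Module.length R (R ⧸ ofList rs) * ((rs.length + m - 1).choose rs.length : ℕ∞) := by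
  obtain ⟨c, hc⟩ : ∃ c, rs.length = c := ⟨_, rfl⟩
  induction c generalizing R rs m with
  | zero =>
    obtain rfl := List.eq_nil_of_length_eq_zero hc
    rw [ofList_nil, ← zero_eq_bot, zero_pow hm.ne']
    simp
  | succ c ih =>
    obtain ⟨x, zs, rfl⟩ := List.exists_cons_of_length_eq_add_one hc
    have hzs : zs.length = c := by simpa using hc
    have := h.isLocalRing_quotient_span_head
    set K := ofList (x :: zs)
    have hxK : span {x} ≤ K := by simp [K]
    clear hc
    induction m, hm using Nat.le_induction with
    | base => simpa using (Submodule.quotEquivOfEq _ _ (pow_one K)).length_eq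
    | succ m _ ihm =>
      have hquot : Module.length R (R ⧸ K ^ (m + 1) ⊔ span {x}) =
          Module.length R (R ⧸ K) * ((c + m).choose c : ℕ∞) := by
        rw [← length_quotient_map_mk le_sup_right, Ideal.map_sup, Ideal.map_pow,
          map_mk_span_ofList_cons, map_quotient_self, sup_bot_eq,
          ih h.quotient_span_head (by omega) (by simpa using hzs), List.length_map, hzs,
          ← map_mk_span_ofList_cons, length_quotient_map_mk hxK,
          show c + (m + 1) - 1 = c + m by omega]
      rw [length_quotient_eq_length_quotient_colon_add _ x, h.colon_span_head_ofList_pow_succ,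
        ihm, hquot, ← mul_add, List.length_cons, hzs, ← Nat.cast_add,
        show c + 1 + (m + 1) - 1 = c + m + 1 by omega, show c + 1 + m - 1 = c + m by omega,
        Nat.choose_succ_succ, add_comm]

end RingTheory.Sequence.IsRegular

end

theorem stmt2_general {R : Type u} [CommRing R] [IsNoetherianRing R] [IsLocalRing R]
    (L : Ideal R) (c : ℕ) (rs : List R) (hlen : rs.length = c)
    (hreg : RingTheory.Sequence.IsRegular R rs) (hspan : Ideal.ofList rs = L)
    (m : ℕ) (hm : 0 < m) :
    moduleLength R (R ⧸ L ^ m)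
      = moduleLength R (R ⧸ L) * ((c + m - 1).choose c : ℕ∞) := by
  subst hspan hlen
  rw [moduleLength_eq_length, moduleLength_eq_length]
  exact hreg.length_quotient_ofList_pow hm

theorem stmt2 {R : Type u} [CommRing R] [IsNoetherianRing R] [IsLocalRing R]
    (L : Ideal R) (hL : L ≠ ⊤) (c : ℕ) (rs : List R) (hlen : rs.length = c)
    (hreg : RingTheory.Sequence.IsRegular R rs) (hspan : Ideal.ofList rs = L)
    (hfin : moduleLength R (R ⧸ L) ≠ ⊤)
    (m : ℕ) (hm : 0 < m) :
    moduleLength R (R ⧸ L ^ m)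
      = moduleLength R (R ⧸ L) * ((c + m - 1).choose c : ℕ∞) :=
  stmt2_general L c rs hlen hreg hspan m hm
end

section
/- Let S be a Cohen–Macaulay Noetherian ring and let I be an unmixed ideal of S of height c ≥ 1 that is generically a complete intersection. Then ht(F_c(I)) ≥ c + 1, and consequently I^(m) : F_c(I)^t = I^(m) for every positive integer m and every positive integer t, where F_c(I) is the c-th Fitting ideal of I regarded as an S-module. -/
open Ideal Filter

universe u

/-- The `m`-th symbolic power of an ideal `I`: the intersection, over all associated primes `p`
of `S ⧸ I`, of the contractions of `I ^ m` extended to the localization at `p`. -/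
noncomputable def symbolicPower {S : Type*} [CommRing S] (I : Ideal S) (m : ℕ) : Ideal S :=
  ⨅ p : associatedPrimes S (S ⧸ I),
    letI : p.1.IsPrime := p.2.isPrime
    ((I ^ m).map (algebraMap S (Localization.AtPrime p.1))).comap
      (algebraMap S (Localization.AtPrime p.1))

/-- The height of an ideal: the infimum of the heights of the primes containing it. -/
noncomputable def idealHeight {S : Type*} [CommRing S] (I : Ideal S) : ℕ∞ :=
  ⨅ (p : PrimeSpectrum S) (_ : I ≤ p.asIdeal), Order.height p

/-- An ideal is unmixed of height `c` if it has height `c` and every associated prime of `S ⧸ I`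
has height `c`. -/
def IsUnmixedOfHeight {S : Type*} [CommRing S] (I : Ideal S) (c : ℕ) : Prop :=
  idealHeight I = (c : ℕ∞) ∧ ∀ p ∈ associatedPrimes S (S ⧸ I), idealHeight p = (c : ℕ∞)

/-- An ideal `I` is generically a complete intersection if, for every associated prime `p` of
`S ⧸ I`, the extension of `I` to the localization at `p` is generated by a regular sequence. -/
def IsGenericallyCI {S : Type*} [CommRing S] (I : Ideal S) : Prop :=
  ∀ p : associatedPrimes S (S ⧸ I),
    letI : p.1.IsPrime := p.2.isPrime
    ∃ rs : List (Localization.AtPrime p.1),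
      RingTheory.Sequence.IsRegular (Localization.AtPrime p.1) rs ∧
      Ideal.ofList rs = I.map (algebraMap S (Localization.AtPrime p.1))

/-- The depth of a local ring: the supremum of lengths of regular sequences contained in the
maximal ideal. -/
noncomputable def localDepth (R : Type*) [CommRing R] [IsLocalRing R] : ℕ∞ :=
  ⨆ rs : {rs : List R // (∀ x ∈ rs, x ∈ IsLocalRing.maximalIdeal R) ∧
      RingTheory.Sequence.IsRegular R rs}, (rs.1.length : ℕ∞)

/-- A ring is Cohen-Macaulay if the localization at every prime ideal has depth equal to its
Krull dimension. -/
def IsCohenMacaulayRing (S : Type*) [CommRing S] : Prop :=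
  ∀ (p : Ideal S) (_hp : p.IsPrime),
    (localDepth (Localization.AtPrime p) : WithBot ℕ∞) = ringKrullDim (Localization.AtPrime p)

/-- The `j`-th Fitting ideal of a module `M`: the ideal generated by the `(n - j)`-minors of a
presentation matrix coming from any generating family of size `n`. -/
noncomputable def fittingIdeal (S : Type*) [CommRing S] (M : Type*) [AddCommGroup M]
    [Module S M] (j : ℕ) : Ideal S :=
  ⨆ (n : ℕ) (g : Fin n → M) (_ : Submodule.span S (Set.range g) = ⊤),
    Ideal.span { d : S | ∃ (r : Fin (n - j) → Fin n → S) (ι : Fin (n - j) → Fin n),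
      (∀ k, ∑ i, r k i • g i = 0) ∧ d = Matrix.det (Matrix.of fun k l => r l (ι k)) }

/-!
Let `q` be a prime of height at most `c`. If `I ⊄ q` then `I_q = S_q`. Otherwise `q` is minimal
over `I`, which has height `c`, hence associated to `S ⧸ I`; so `I_q` is generated by a regular
sequence, of length at most `depth S_q = ht q ≤ c` since `S` is Cohen–Macaulay. Either way `I_q` is
generated by at most `c` elements of `I`, and a presentation of `I` built from them has a `c`-th
minor outside `q`. Thus `F_c(I) ⊄ q`, i.e. `ht F_c(I) ≥ c + 1`. As every associated prime `p` of
`S ⧸ I` has height `c`, some element of `F_c(I)^t` is a unit in `S_p`, so taking the colon does not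
enlarge any of the contractions whose intersection is `I^(m)`.
-/

section Height

variable {S : Type*} [CommRing S]

theorem idealHeight_eq_height (I : Ideal S) : idealHeight I = I.height := by
  apply le_antisymm
  · rw [I.height_eq_inf_minimalPrimes]
    refine le_iInf₂ fun J hJ => ?_
    have := hJ.isPrime
    have hle : idealHeight I ≤ Order.height (⟨J, this⟩ : PrimeSpectrum S) :=
      iInf₂_le (f := fun (p : PrimeSpectrum S) (_ : I ≤ p.asIdeal) => Order.height p) _ hJ.1.2
    rwa [← PrimeSpectrum.height_eq_orderHeight] at hle
  · refine le_iInf₂ fun p hp => ?_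
    rw [← PrimeSpectrum.height_eq_orderHeight]
    exact height_mono hp

theorem mem_associatedPrimes_of_height_le [IsNoetherianRing S] {I q : Ideal S} [q.IsPrime]
    (hIq : I ≤ q) (hq : q.height ≤ I.height) : q ∈ associatedPrimes S (S ⧸ I) := by
  have := Module.associatedPrimes.minimalPrimes_annihilator_subset_associatedPrimes S (S ⧸ I)
  rw [Ideal.annihilator_quotient] at this
  exact this (mem_minimalPrimes_of_height_le hIq hq)

theorem IsCohenMacaulayRing.length_le_height (hCM : IsCohenMacaulayRing S) (q : Ideal S)
    [q.IsPrime] {rs : List (Localization.AtPrime q)}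
    (hmem : ∀ x ∈ rs, x ∈ IsLocalRing.maximalIdeal (Localization.AtPrime q))
    (hreg : RingTheory.Sequence.IsRegular (Localization.AtPrime q) rs) :
    (rs.length : ℕ∞) ≤ q.height := by
  have hdepth : (rs.length : ℕ∞) ≤ localDepth (Localization.AtPrime q) :=
    le_iSup (fun rs : {rs : List _ // _} => (rs.1.length : ℕ∞)) ⟨rs, hmem, hreg⟩
  have hdim := hCM q ‹_›
  rw [IsLocalization.AtPrime.ringKrullDim_eq_height q] at hdim
  exact hdepth.trans (WithBot.coe_le_coe.1 hdim.le)

end Height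

section Fitting

variable {S : Type*} [CommRing S] {M : Type*} [AddCommGroup M] [Module S M]

theorem det_mem_fittingIdeal {m j : ℕ} (g : Fin (m + j) → M)
    (hg : Submodule.span S (Set.range g) = ⊤) (r : Fin m → Fin (m + j) → S)
    (hr : ∀ k, ∑ i, r k i • g i = 0) (ι : Fin m → Fin (m + j)) :
    (Matrix.of fun k l => r l (ι k)).det ∈ fittingIdeal S M j := by
  -- `m + j - j` is not definitionally `m`, so the rows are reindexed along `finCongr`.
  have e : m + j - j = m := Nat.add_sub_cancel m j
  have hle : Ideal.span {d : S | ∃ (r : Fin (m + j - j) → Fin (m + j) → S)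
      (ι : Fin (m + j - j) → Fin (m + j)), (∀ k, ∑ i, r k i • g i = 0) ∧
        d = (Matrix.of fun k l => r l (ι k)).det} ≤ fittingIdeal S M j :=
    le_iSup_of_le (m + j) (le_iSup_of_le g (le_iSup_of_le hg le_rfl))
  refine hle (subset_span ?_)
  exact ⟨fun k => r (Fin.cast e k), fun k => ι (Fin.cast e k), fun k => hr _,
    (Matrix.det_submatrix_equiv_self (finCongr e) _).symm⟩

theorem prod_mem_fittingIdeal {n c : ℕ} (h : Fin n → M)
    (hh : Submodule.span S (Set.range h) = ⊤) (a : Fin c → M) (s : Fin n → S)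
    (hs : ∀ j, s j • h j ∈ Submodule.span S (Set.range a)) :
    ∏ j, s j ∈ fittingIdeal S M c := by
  classical
  -- Present `M` by the generators `h, a` and the relations `s j • h j - ∑ i, b j i • a i`;
  -- their minor on the `h`-columns is the diagonal matrix of the `s j`.
  choose b hb using fun j => (Submodule.mem_span_range_iff_exists_fun S).1 (hs j)
  have hg : Submodule.span S (Set.range (Fin.append h a)) = ⊤ := by
    refine top_le_iff.1 (hh ▸ Submodule.span_mono ?_)
    rintro _ ⟨j, rfl⟩
    exact ⟨Fin.castAdd c j, Fin.append_left h a j⟩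
  have hrel : ∀ j, ∑ i, Fin.append (Pi.single j (s j)) (-b j) i • Fin.append h a i = 0 := by
    intro j
    simp [Fin.sum_univ_add, Pi.single_apply, ite_smul, hb]
  convert det_mem_fittingIdeal _ hg _ hrel (Fin.castAdd c) using 1
  rw [← Matrix.det_diagonal]
  congr 1
  ext k l
  by_cases hkl : k = l <;> simp [Pi.single_apply, hkl]

theorem exists_mem_fittingIdeal_of_smul_mem_span [Module.Finite S M] (T : Submonoid S)
    {n c : ℕ} (hn : n ≤ c) (a : Fin n → M)
    (ha : ∀ x : M, ∃ s ∈ T, s • x ∈ Submodule.span S (Set.range a)) :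
    ∃ d ∈ fittingIdeal S M c, d ∈ T := by
  obtain ⟨k, h, hh⟩ := Module.Finite.exists_fin (R := S) (M := M)
  choose s hsT hs using fun j => ha (h j)
  let a' : Fin c → M := fun i => if hi : (i : ℕ) < n then a ⟨i, hi⟩ else 0
  have ha' : Set.range a ⊆ Set.range a' := by
    rintro _ ⟨i, rfl⟩
    exact ⟨Fin.castLE hn i, by simp [a']⟩
  exact ⟨_, prod_mem_fittingIdeal h hh a' s fun j => Submodule.span_mono ha' (hs j),
    T.prod_mem fun j _ => hsT j⟩

end Fitting

section FittingOfIdeal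

variable {S : Type*} [CommRing S] [IsNoetherianRing S]

theorem Ideal.exists_mem_fittingIdeal_of_mul_mem_span {I : Ideal S} (T : Submonoid S)
    {n c : ℕ} (hn : n ≤ c) (a : Fin n → S) (haI : ∀ i, a i ∈ I)
    (ha : ∀ x ∈ I, ∃ s ∈ T, s * x ∈ span (Set.range a)) :
    ∃ d ∈ fittingIdeal S I c, d ∈ T := by
  refine exists_mem_fittingIdeal_of_smul_mem_span T hn (fun i => ⟨a i, haI i⟩) fun x => ?_
  obtain ⟨s, hsT, b, hb⟩ := (ha x x.2).imp fun s => And.imp_right mem_span_range_iff_exists_fun.1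
  refine ⟨s, hsT, (Submodule.mem_span_range_iff_exists_fun S).2 ⟨b, Subtype.ext ?_⟩⟩
  simpa using hb

theorem fittingIdeal_not_le_of_not_le {I q : Ideal S} [q.IsPrime] (hIq : ¬I ≤ q) {c : ℕ}
    (hc : 1 ≤ c) : ¬fittingIdeal S I c ≤ q := by
  obtain ⟨s, hsI, hsq⟩ := SetLike.not_le_iff_exists.1 hIq
  obtain ⟨d, hdF, hdq⟩ := exists_mem_fittingIdeal_of_mul_mem_span q.primeCompl hc ![s]
    (by simpa using hsI) fun x _ => ⟨s, hsq, mul_comm s x ▸ mul_mem_left _ x (subset_span ⟨0, rfl⟩)⟩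
  exact fun hle => hdq (hle hdF)

theorem fittingIdeal_not_le_of_mem_associatedPrimes (hCM : IsCohenMacaulayRing S)
    {I : Ideal S} (hgci : IsGenericallyCI I) {q : Ideal S} (hq : q ∈ associatedPrimes S (S ⧸ I))
    {c : ℕ} (hqc : q.height ≤ c) : ¬fittingIdeal S I c ≤ q := by
  have := hq.isPrime
  obtain ⟨rs, hreg, hrs⟩ := hgci ⟨q, hq⟩
  have hne : ofList rs ≠ ⊤ := by
    simpa [smul_eq_mul, mul_top, eq_comm] using hreg.top_ne_smul
  have hmem : ∀ x ∈ rs, x ∈ IsLocalRing.maximalIdeal (Localization.AtPrime q) :=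
    fun x hx => IsLocalRing.le_maximalIdeal hne (subset_span hx)
  have hlen : rs.length ≤ c := by exact_mod_cast (hCM.length_le_height q hmem hreg).trans hqc
  have hlift : ∀ i, rs.get i ∈ I.map (algebraMap S (Localization.AtPrime q)) :=
    fun i => hrs ▸ subset_span (List.get_mem rs i)
  choose w hw using fun i => (IsLocalization.mem_map_algebraMap_iff q.primeCompl _).1 (hlift i)
  let a : Fin rs.length → S := fun i => (w i).1
  have hspan : I.map (algebraMap S (Localization.AtPrime q)) ≤
      (span (Set.range a)).map (algebraMap S (Localization.AtPrime q)) := by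
    rw [← hrs, ofList, span_le]
    intro x hx
    obtain ⟨i, rfl⟩ := List.mem_iff_get.1 hx
    refine (mul_unit_mem_iff_mem _ (IsLocalization.map_units _ (w i).2)).1 ?_
    exact (hw i).symm ▸ mem_map_of_mem _ (subset_span ⟨i, rfl⟩)
  obtain ⟨d, hdF, hdq⟩ := exists_mem_fittingIdeal_of_mul_mem_span q.primeCompl hlen a
    (fun i => (w i).1.2) fun x hx =>
      (IsLocalization.algebraMap_mem_map_algebraMap_iff q.primeCompl _ _ _).1
        (hspan (mem_map_of_mem _ hx))
  exact fun hle => hdq (hle hdF)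

theorem fittingIdeal_not_le_of_height_le (hCM : IsCohenMacaulayRing S) {I : Ideal S} {c : ℕ}
    (hc : 1 ≤ c) (hunm : IsUnmixedOfHeight I c) (hgci : IsGenericallyCI I) (q : Ideal S)
    [q.IsPrime] (hqc : q.height ≤ c) : ¬fittingIdeal S I c ≤ q := by
  by_cases hIq : I ≤ q
  · refine fittingIdeal_not_le_of_mem_associatedPrimes hCM hgci
      (mem_associatedPrimes_of_height_le hIq ?_) hqc
    rwa [← idealHeight_eq_height I, hunm.1]
  · exact fittingIdeal_not_le_of_not_le hIq hc

end FittingOfIdeal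

theorem colon_symbolicPower_eq {S : Type*} [CommRing S] {I K : Ideal S}
    (hK : ∀ p ∈ associatedPrimes S (S ⧸ I), ¬K ≤ p) (m : ℕ) :
    Submodule.colon (symbolicPower I m) (K : Set S) = symbolicPower I m := by
  refine le_antisymm (fun x hx => ?_)
    fun x hx => Submodule.mem_colon.2 fun k _ => mul_mem_right k _ hx
  refine (Submodule.mem_iInf _).2 ?_
  rintro ⟨p, hp⟩
  have := hp.isPrime
  obtain ⟨d, hdK, hdp⟩ := SetLike.not_le_iff_exists.1 (hK p hp)
  have hxd : x * d ∈ symbolicPower I m := Submodule.mem_colon.1 hx d hdK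
  have hxd' := (Submodule.mem_iInf _).1 hxd ⟨p, hp⟩
  rw [Ideal.mem_comap, map_mul] at hxd'
  rw [Ideal.mem_comap]
  exact (mul_unit_mem_iff_mem _ (IsLocalization.map_units _ (⟨d, hdp⟩ : p.primeCompl))).1 hxd'

theorem stmt5 {S : Type u} [CommRing S] [IsNoetherianRing S] (hCM : IsCohenMacaulayRing S)
    (I : Ideal S) (c : ℕ) (hc : 1 ≤ c)
    (hunm : IsUnmixedOfHeight I c) (hgci : IsGenericallyCI I) :
    ((c : ℕ∞) + 1) ≤ idealHeight (fittingIdeal S ↥I c) ∧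
      ∀ (m t : ℕ), 0 < m → 0 < t →
        Submodule.colon (symbolicPower I m) ((fittingIdeal S ↥I c ^ t : Ideal S) : Set S) = symbolicPower I m := by
  have hF := fittingIdeal_not_le_of_height_le hCM hc hunm hgci
  refine ⟨le_iInf₂ fun p hFp => ?_, fun m t _ _ => colon_symbolicPower_eq (fun p hp hle => ?_) m⟩
  · by_contra! hlt
    exact hF p.asIdeal (p.height_eq_orderHeight ▸ Order.le_of_lt_add_one hlt) hFp
  · have := hp.isPrime
    refine hF p ?_ (IsPrime.le_of_pow_le hle)
    rw [← idealHeight_eq_height, hunm.2 p hp]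
end

section
/- Let S be a Cohen–Macaulay Noetherian ring, let I be an unmixed ideal of S of height c that is generically a complete intersection, and let m be a positive integer. Then I^(m) = I^m if and only if Ass_S(S/I^m) = Ass_S(S/I). -/
/-!
Unmixedness makes every associated prime `p` of `I` minimal over `I`, hence over `I ^ m`.
So `p` is associated to `S ⧸ I ^ m`, and `I ^ m S_p ∩ S` is `p`-primary: `I^(m)` is a primary
decomposition with radicals `Ass(S ⧸ I)`, and when it equals `I ^ m` every associated prime of
`I ^ m` is one of these radicals. Conversely every ideal `J` of a Noetherian ring is the
intersection of the `J S_p ∩ S` over `p ∈ Ass(S ⧸ J)`.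
-/

open Ideal Filter

universe u

namespace Ideal

variable {S : Type*} [CommRing S]

noncomputable def contractionAtPrime (J p : Ideal S) [p.IsPrime] : Ideal S :=
  (J.map (algebraMap S (Localization.AtPrime p))).comap (algebraMap S (Localization.AtPrime p))

section contractionAtPrime

variable {J p : Ideal S} [p.IsPrime]

lemma mem_contractionAtPrime_iff {x : S} :
    x ∈ J.contractionAtPrime p ↔ ∃ s ∉ p, s * x ∈ J :=
  IsLocalization.algebraMap_mem_map_algebraMap_iff p.primeCompl _ J x

lemma le_contractionAtPrime : J ≤ J.contractionAtPrime p :=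
  le_comap_map

lemma contractionAtPrime_le (h : J ≤ p) : J.contractionAtPrime p ≤ p := by
  intro x hx
  obtain ⟨s, hs, hsx⟩ := mem_contractionAtPrime_iff.mp hx
  exact (IsPrime.mem_or_mem ‹_› (h hsx)).resolve_left hs

lemma radical_contractionAtPrime_of_mem_minimalPrimes (hp : p ∈ J.minimalPrimes) :
    (J.contractionAtPrime p).radical = p := by
  refine le_antisymm ((IsPrime.radical_le_iff ‹_›).mpr (contractionAtPrime_le hp.1.2)) ?_
  intro x hxp
  by_contra hx
  -- a prime over `J` avoiding `x` and `S \ p` would lie strictly below `p`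
  have hdisj : Disjoint (J : Set S) (p.primeCompl ⊔ Submonoid.powers x : Submonoid S) := by
    refine Set.disjoint_left.mpr fun y hyJ hy ↦ ?_
    obtain ⟨s, hs, _, ⟨n, rfl⟩, rfl⟩ := Submonoid.mem_sup.mp hy
    exact hx ⟨n, mem_contractionAtPrime_iff.mpr ⟨s, hs, hyJ⟩⟩
  obtain ⟨q, hq, hJq, hqdisj⟩ := exists_le_prime_disjoint _ _ hdisj
  have hqp : q ≤ p := fun y hyq ↦ by
    by_contra hyp
    exact Set.disjoint_left.mp hqdisj hyq
      (Submonoid.mem_sup_left (show y ∈ p.primeCompl from hyp))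
  exact Set.disjoint_left.mp hqdisj (hp.2 ⟨hq, hJq⟩ hqp hxp)
    (Submonoid.mem_sup_right (Submonoid.mem_powers x))

lemma isPrimary_contractionAtPrime_of_mem_minimalPrimes (hp : p ∈ J.minimalPrimes) :
    (J.contractionAtPrime p).IsPrimary := by
  refine isPrimary_iff.mpr ⟨fun h ↦ ?_, fun {x y} hxy ↦ ?_⟩
  · exact IsPrime.ne_top ‹_› (top_le_iff.mp (h ▸ contractionAtPrime_le hp.1.2))
  · rw [radical_contractionAtPrime_of_mem_minimalPrimes hp, or_iff_not_imp_right]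
    intro hy
    obtain ⟨s, hs, hsxy⟩ := mem_contractionAtPrime_iff.mp hxy
    refine mem_contractionAtPrime_iff.mpr ⟨s * y, (IsPrime.mul_notMem ‹_› hs hy), ?_⟩
    rwa [mul_right_comm, mul_assoc]

end contractionAtPrime

instance {M : Type*} [AddCommGroup M] [Module S M] (p : associatedPrimes S M) : p.1.IsPrime :=
  p.2.isPrime

lemma colon_bot_quotient_mk (J : Ideal S) (x : S) :
    (⊥ : Submodule S (S ⧸ J)).colon {Quotient.mk J x} = J.colon {x} := by
  ext r
  rw [Submodule.mem_colon_singleton, Submodule.mem_colon_singleton, Submodule.mem_bot,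
    smul_eq_mul, ← Quotient.eq_zero_iff_mem, map_mul]
  rfl

lemma le_of_mem_associatedPrimes_quotient {J p : Ideal S}
    (hp : p ∈ associatedPrimes S (S ⧸ J)) : J ≤ p := by
  simpa only [Submodule.annihilator_top, annihilator_quotient] using hp.annihilator_le

lemma associatedPrimes_quotient_subset_of_finsetInf_eq {ι : Type*} {J : Ideal S}
    {s : Finset ι} {Q : ι → Ideal S} (hJ : s.inf Q = J) (hQ : ∀ i ∈ s, (Q i).IsPrimary) :
    associatedPrimes S (S ⧸ J) ⊆ (fun i ↦ (Q i).radical) '' s := by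
  rintro p ⟨hp, y, rfl⟩
  obtain ⟨x, rfl⟩ := Quotient.mk_surjective y
  rw [colon_bot_quotient_mk, ← hJ, Submodule.colon_finsetInf] at hp ⊢
  obtain ⟨i, hi, hip⟩ := (IsPrime.inf_le' hp).mp le_radical
  have hxi : x ∉ Q i := fun hx ↦ hp.ne_top (top_le_iff.mp
    ((Submodule.colon_eq_top_iff_subset _).mpr (Set.singleton_subset_iff.mpr hx) ▸ hip))
  have hrad : ((Q i).colon {x}).radical = (Q i).radical := by
    rw [(hQ i hi).radical_colon_singleton_of_notMem hxi, Submodule.colon_univ]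
  refine ⟨i, hi, le_antisymm (?_ : (Q i).radical ≤ _) (?_ : _ ≤ (Q i).radical)⟩
  · exact hrad ▸ hp.radical_le_iff.mpr hip
  · exact hrad ▸ radical_mono (Finset.inf_le hi)

lemma minimalPrimes_subset_associatedPrimes_quotient [IsNoetherianRing S] (J : Ideal S) :
    J.minimalPrimes ⊆ associatedPrimes S (S ⧸ J) := by
  simpa only [annihilator_quotient] using
    Module.associatedPrimes.minimalPrimes_annihilator_subset_associatedPrimes S (S ⧸ J)

lemma iInf_contractionAtPrime_associatedPrimes [IsNoetherianRing S] (J : Ideal S) :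
    ⨅ p : associatedPrimes S (S ⧸ J), J.contractionAtPrime p.1 = J := by
  refine le_antisymm (fun x hx ↦ ?_) (le_iInf fun _ ↦ le_contractionAtPrime)
  by_contra hxJ
  obtain ⟨p, hp, hpx⟩ := exists_le_isAssociatedPrime_of_isNoetherianRing S (Quotient.mk J x)
    (mt Quotient.eq_zero_iff_mem.mp hxJ)
  have := hp.isPrime
  obtain ⟨s, hs, hsx⟩ :=
    mem_contractionAtPrime_iff.mp (Submodule.mem_iInf _ |>.mp hx ⟨p, hp⟩)
  rw [colon_bot_quotient_mk] at hpx
  exact hs (hpx (Submodule.mem_colon_singleton.mpr hsx))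

end Ideal

section height

variable {S : Type*} [CommRing S]

lemma idealHeight_eq_height_s7 (p : Ideal S) [hp : p.IsPrime] :
    idealHeight p = Order.height (⟨p, hp⟩ : PrimeSpectrum S) :=
  le_antisymm (iInf₂_le (⟨p, hp⟩ : PrimeSpectrum S) le_rfl)
    (le_iInf₂ fun q hq ↦ Order.height_mono (show (⟨p, hp⟩ : PrimeSpectrum S) ≤ q from hq))

lemma IsUnmixedOfHeight.associatedPrimes_subset_minimalPrimes {I : Ideal S} {c : ℕ}
    (h : IsUnmixedOfHeight I c) : associatedPrimes S (S ⧸ I) ⊆ I.minimalPrimes := by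
  intro p hp
  refine ⟨⟨hp.isPrime, Ideal.le_of_mem_associatedPrimes_quotient hp⟩,
    fun q ⟨hq, hIq⟩ hqp ↦ ?_⟩
  have hpc : Order.height (⟨p, hp.isPrime⟩ : PrimeSpectrum S) = c := by
    rw [← idealHeight_eq_height_s7, h.2 p hp]
  have hcq : (c : ℕ∞) ≤ Order.height (⟨q, hq⟩ : PrimeSpectrum S) :=
    h.1 ▸ iInf₂_le (⟨q, hq⟩ : PrimeSpectrum S) hIq
  by_contra hpq
  have hqp' : (⟨q, hq⟩ : PrimeSpectrum S) < ⟨p, hp.isPrime⟩ := lt_of_le_not_ge hqp hpq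
  have hlt := Order.height_strictMono hqp'
    ((Order.height_mono hqp'.le).trans_lt (hpc ▸ ENat.natCast_lt_top c))
  exact (hlt.trans_le (hpc.le.trans hcq)).false

end height

theorem stmt7_general {S : Type u} [CommRing S] [IsNoetherianRing S]
    (I : Ideal S) (c : ℕ) (hunm : IsUnmixedOfHeight I c)
    (m : ℕ) (hm : 0 < m) :
    symbolicPower I m = I ^ m ↔
      associatedPrimes S (S ⧸ (I ^ m)) = associatedPrimes S (S ⧸ I) := by
  have hmin : associatedPrimes S (S ⧸ I) ⊆ (I ^ m).minimalPrimes := by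
    rw [← radical_minimalPrimes, radical_pow I hm.ne', radical_minimalPrimes]
    exact hunm.associatedPrimes_subset_minimalPrimes
  have hsub := hmin.trans (minimalPrimes_subset_associatedPrimes_quotient _)
  constructor
  · intro h
    refine Set.Subset.antisymm ?_ hsub
    have := (associatedPrimes.finite S (S ⧸ I)).fintype
    have hass := associatedPrimes_quotient_subset_of_finsetInf_eq
      (Q := fun p : associatedPrimes S (S ⧸ I) ↦ (I ^ m).contractionAtPrime p.1)
      (Finset.inf_univ_eq_iInf _ |>.trans h)
      (fun p _ ↦ isPrimary_contractionAtPrime_of_mem_minimalPrimes (hmin p.2))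
    rintro q hq
    obtain ⟨p, -, rfl⟩ := hass hq
    simpa only [radical_contractionAtPrime_of_mem_minimalPrimes (hmin p.2)] using p.2
  · intro h
    refine le_antisymm ?_ (le_iInf fun _ ↦ le_contractionAtPrime)
    conv_rhs => rw [← iInf_contractionAtPrime_associatedPrimes (I ^ m)]
    exact le_iInf fun p ↦ iInf_le_of_le ⟨p.1, h ▸ p.2⟩ le_rfl

theorem stmt7 {S : Type u} [CommRing S] [IsNoetherianRing S] (hCM : IsCohenMacaulayRing S)
    (I : Ideal S) (c : ℕ) (hunm : IsUnmixedOfHeight I c) (hgci : IsGenericallyCI I)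
    (m : ℕ) (hm : 0 < m) :
    symbolicPower I m = I ^ m ↔
      associatedPrimes S (S ⧸ (I ^ m)) = associatedPrimes S (S ⧸ I) :=
  stmt7_general I c hunm m hm
end
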